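/- Let M = B ×_{f₁} M₁ × ⋯ ×_{f_m} M_m be a multiply warped product with semi-symmetric metric connection ∇̄ associated to P ∈ Γ(TM_r) for a fixed r, and let ζ = ζ_B + Σᵢ ζᵢ be a vector field on M. Then for all vector fields X = X_B + Σᵢ Xᵢ and Y = Y_B + Σᵢ Yᵢ on M: (L̄_ζ g)(X,Y) = (L^B_{ζ_B} g_B)(X_B,Y_B) + Σᵢ fᵢ²(Lⁱ_{ζᵢ} gᵢ)(Xᵢ,Yᵢ) + Σᵢ 2π(ζᵢ)·g(X,Y) + Σᵢ 2fᵢ·ζ_B(fᵢ)·gᵢ(Xᵢ,Yᵢ) − Σᵢ π(Yᵢ)·g(X,ζ) − Σᵢ π(Xᵢ)·g(Y,ζ), where L^B and Lⁱ denote the Lie derivatives on B and Mᵢ. -/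

import Mathlib

/-!
An abstract (axiomatized) framework for pseudo-Riemannian geometry, following the paper
"Killing Vector Fields on Multiply Warped Products with a Semi-symmetric Metric Connection".
Here `R` plays the role of the commutative ring of smooth functions on the (product)
manifold, `V` the `R`-module of vector fields, `g` the pseudo-Riemannian metric,
`nabla` the Levi-Civita connection, `bracket` the Lie bracket of vector fields,
`act X h` the action `X(h)` of a vector field `X` on a function `h`,
`ric` the Ricci curvature, and `compactNoBoundary` records that the underlying
manifold is compact and without boundary.
-/
structure PR (R : Type*) [CommRing R] (V : Type*) [AddCommGroup V] [Module R V] where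
  g : V → V → R
  g_symm : ∀ X Y, g X Y = g Y X
  g_addl : ∀ X Y Z, g (X + Y) Z = g X Z + g Y Z
  g_smull : ∀ (a : R) (X Y : V), g (a • X) Y = a * g X Y
  nabla : V → V → V
  bracket : V → V → V
  act : V → R → R
  ric : V → V → R
  compactNoBoundary : Prop

namespace PR

variable {R : Type*} [CommRing R] {V : Type*} [AddCommGroup V] [Module R V]

/-- The semi-symmetric metric connection associated to `P`:
`∇̄_X Y = ∇_X Y + π(Y)X − g(X,Y)P`, where `π(X) = g(X,P)`. -/
def snabla (C : PR R V) (P X Y : V) : V :=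
  C.nabla X Y + C.g Y P • X - C.g X Y • P

/-- The Lie derivative of the metric: `(L_ζ g)(X,Y) = g(∇_X ζ, Y) + g(∇_Y ζ, X)`. -/
def lieg (C : PR R V) (ζ X Y : V) : R :=
  C.g (C.nabla X ζ) Y + C.g (C.nabla Y ζ) X

/-- The semi-symmetric metric Lie derivative of the metric:
`(L̄_ζ g)(X,Y) = g(∇̄_X ζ, Y) + g(∇̄_Y ζ, X)`. -/
def slieg (C : PR R V) (P ζ X Y : V) : R :=
  C.g (C.snabla P X ζ) Y + C.g (C.snabla P Y ζ) X

/-- `ζ` is a Killing vector field iff `g(∇_X ζ, X) = 0` for every vector field `X`. -/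
def IsKilling (C : PR R V) (ζ : V) : Prop := ∀ X, C.g (C.nabla X ζ) X = 0

/-- `ζ` is a semi-symmetric metric Killing vector field iff `g(∇̄_X ζ, X) = 0`
for every vector field `X`. -/
def IsSKilling (C : PR R V) (P ζ : V) : Prop := ∀ X, C.g (C.snabla P X ζ) X = 0

/-- The second Lie derivative of the metric, `(L_ζ L_ζ g)(X,Y) =
g(∇_ζ∇_X ζ − ∇_{[ζ,X]}ζ, Y) + g(X, ∇_ζ∇_Y ζ − ∇_{[ζ,Y]}ζ) + 2g(∇_X ζ, ∇_Y ζ)`. -/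
def lie2g (C : PR R V) (ζ X Y : V) : R :=
  C.g (C.nabla ζ (C.nabla X ζ) - C.nabla (C.bracket ζ X) ζ) Y
    + C.g X (C.nabla ζ (C.nabla Y ζ) - C.nabla (C.bracket ζ Y) ζ)
    + 2 * C.g (C.nabla X ζ) (C.nabla Y ζ)

/-- `ζ` is a 2-Killing vector field iff `L_ζ L_ζ g = 0`. -/
def IsTwoKilling (C : PR R V) (ζ : V) : Prop := ∀ X Y, C.lie2g ζ X Y = 0

end PR


namespace PR
variable {R : Type*} [CommRing R] {V : Type*} [AddCommGroup V] [Module R V]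

lemma g_zerol' (C : PR R V) (Z : V) : C.g 0 Z = 0 := by
  simpa using C.g_smull 0 0 Z

lemma g_negl' (C : PR R V) (X Z : V) : C.g (-X) Z = -C.g X Z := by
  simpa using C.g_smull (-1) X Z

lemma g_subl' (C : PR R V) (X Y Z : V) : C.g (X - Y) Z = C.g X Z - C.g Y Z := by
  rw [sub_eq_add_neg, C.g_addl, C.g_negl', ← sub_eq_add_neg]

lemma g_suml' (C : PR R V) {ι : Type*} (s : Finset ι) (v : ι → V) (Z : V) :
    C.g (∑ i ∈ s, v i) Z = ∑ i ∈ s, C.g (v i) Z := by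
  classical
  induction s using Finset.induction_on with
  | empty => simp [C.g_zerol']
  | insert _ _ h ih => rw [Finset.sum_insert h, Finset.sum_insert h, C.g_addl, ih]

end PR

/-- A multiply warped product `M = B ×_{f₁} M₁ × ⋯ ×_{f_m} M_m`: the data of the base and
the `m` fibres, the warping functions `f i` (with multiplicative inverses `finv i`) and
their gradients `gradf i` on `B`. Vector fields on `M` are pairs `X = (X_B, (X_i)_i)` of
(lifts of) vector fields on the factors. -/
structure MW (R : Type*) [CommRing R] {m : ℕ} (VB : Type*) (V : Fin m → Type*)
    [AddCommGroup VB] [Module R VB] [∀ i, AddCommGroup (V i)] [∀ i, Module R (V i)] where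
  CB : PR R VB
  C : ∀ i, PR R (V i)
  f : Fin m → R
  finv : Fin m → R
  f_inv : ∀ i, f i * finv i = 1
  gradf : Fin m → VB
  gradf_spec : ∀ i Y, CB.g (gradf i) Y = CB.act Y (f i)

namespace MW

variable {R : Type*} [CommRing R] {m : ℕ} {VB : Type*} {V : Fin m → Type*}
  [AddCommGroup VB] [Module R VB] [∀ i, AddCommGroup (V i)] [∀ i, Module R (V i)]

/-- The multiply warped product metric `g = g_B ⊕ f₁²g₁ ⊕ ⋯ ⊕ f_m²g_m`. -/
def gW (W : MW R VB V) (X Y : VB × (∀ i, V i)) : R :=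
  W.CB.g X.1 Y.1 + ∑ i, (W.f i) ^ 2 * (W.C i).g (X.2 i) (Y.2 i)

/-- The semi-symmetric metric connection of the multiply warped product for `P ∈ Γ(TB)`
(combining the five formulas of Lemma 4.1 of the paper). -/
def snablaB (W : MW R VB V) (P : VB) (X Y : VB × (∀ i, V i)) : VB × (∀ i, V i) :=
  (W.CB.snabla P X.1 Y.1 - (∑ i, (W.f i * (W.C i).g (X.2 i) (Y.2 i)) • W.gradf i)
      - (∑ i, (W.f i) ^ 2 * (W.C i).g (X.2 i) (Y.2 i)) • P,
    fun i => (W.C i).nabla (X.2 i) (Y.2 i)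
      + (W.CB.act X.1 (W.f i) * W.finv i) • Y.2 i
      + (W.CB.act Y.1 (W.f i) * W.finv i + W.CB.g Y.1 P) • X.2 i)

/-- For `P ∈ Γ(TM_r)`, the value of the 1-form `π` on the lift of the `j`-th component of
a vertical field `z`: `π(z_j) = f_r² g_r((z_j)_r, P)` (nonzero only for `j = r`). -/
def piV (W : MW R VB V) (r : Fin m) (P : V r) (z : ∀ i, V i) (j : Fin m) : R :=
  (W.f r) ^ 2 * (W.C r).g (Pi.single j (z j) r) P

/-- The semi-symmetric metric connection of the multiply warped product for
`P ∈ Γ(TM_r)` (combining the five formulas of Lemma 4.2 of the paper). -/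
def snablaF (W : MW R VB V) (r : Fin m) (P : V r) (X Y : VB × (∀ i, V i)) :
    VB × (∀ i, V i) :=
  (W.CB.nabla X.1 Y.1 + ((W.f r) ^ 2 * (W.C r).g (Y.2 r) P) • X.1
      - ∑ i, (W.f i * (W.C i).g (X.2 i) (Y.2 i)) • W.gradf i,
    (fun i => (W.C i).nabla (X.2 i) (Y.2 i)
      + (W.CB.act X.1 (W.f i) * W.finv i) • Y.2 i
      + (W.CB.act Y.1 (W.f i) * W.finv i) • X.2 i
      + ((W.f r) ^ 2 * (W.C r).g (Y.2 r) P) • X.2 i)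
    + Pi.single r ((-(W.gW X Y)) • P))

/-- Semi-symmetric metric Lie derivative of the multiply warped metric, `P ∈ Γ(TB)`. -/
def sliegB (W : MW R VB V) (P : VB) (ζ X Y : VB × (∀ i, V i)) : R :=
  W.gW (W.snablaB P X ζ) Y + W.gW (W.snablaB P Y ζ) X

/-- Semi-symmetric metric Lie derivative of the multiply warped metric, `P ∈ Γ(TM_r)`. -/
def sliegF (W : MW R VB V) (r : Fin m) (P : V r) (ζ X Y : VB × (∀ i, V i)) : R :=
  W.gW (W.snablaF r P X ζ) Y + W.gW (W.snablaF r P Y ζ) X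

/-- `ζ` is a semi-symmetric metric Killing field of the multiply warped product,
`P ∈ Γ(TB)`. -/
def IsSKillingB (W : MW R VB V) (P : VB) (ζ : VB × (∀ i, V i)) : Prop :=
  ∀ X, W.gW (W.snablaB P X ζ) X = 0

/-- `ζ` is a semi-symmetric metric Killing field of the multiply warped product,
`P ∈ Γ(TM_r)`. -/
def IsSKillingF (W : MW R VB V) (r : Fin m) (P : V r) (ζ : VB × (∀ i, V i)) : Prop :=
  ∀ X, W.gW (W.snablaF r P X ζ) X = 0

/-- The Levi-Civita connection of the multiply warped product (Lemma 6.7 of the paper). -/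
def nablaT (W : MW R VB V) (X Y : VB × (∀ i, V i)) : VB × (∀ i, V i) :=
  (W.CB.nabla X.1 Y.1 - ∑ i, (W.f i * (W.C i).g (X.2 i) (Y.2 i)) • W.gradf i,
    fun i => (W.C i).nabla (X.2 i) (Y.2 i)
      + (W.CB.act X.1 (W.f i) * W.finv i) • Y.2 i
      + (W.CB.act Y.1 (W.f i) * W.finv i) • X.2 i)

/-- The Lie bracket of (lifted) vector fields on the multiply warped product. -/
def bracketT (W : MW R VB V) (X Y : VB × (∀ i, V i)) : VB × (∀ i, V i) :=
  (W.CB.bracket X.1 Y.1, fun i => (W.C i).bracket (X.2 i) (Y.2 i))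

/-- The action of a vector field of the multiply warped product on functions. -/
def actT (W : MW R VB V) (X : VB × (∀ i, V i)) (h : R) : R :=
  W.CB.act X.1 h + ∑ i, (W.C i).act (X.2 i) h

/-- The Lie derivative of the multiply warped metric. -/
def liegT (W : MW R VB V) (ζ X Y : VB × (∀ i, V i)) : R :=
  W.gW (W.nablaT X ζ) Y + W.gW (W.nablaT Y ζ) X

/-- The second Lie derivative `(L_ζ L_ζ g)(X,Y)` of the multiply warped metric. -/
def lie2T (W : MW R VB V) (ζ X Y : VB × (∀ i, V i)) : R :=
  W.gW (W.nablaT ζ (W.nablaT X ζ) - W.nablaT (W.bracketT ζ X) ζ) Y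
    + W.gW X (W.nablaT ζ (W.nablaT Y ζ) - W.nablaT (W.bracketT ζ Y) ζ)
    + 2 * W.gW (W.nablaT X ζ) (W.nablaT Y ζ)

/-- `ζ` is a 2-Killing vector field of the multiply warped product. -/
def IsTwoKillingT (W : MW R VB V) (ζ : VB × (∀ i, V i)) : Prop :=
  ∀ X Y, W.lie2T ζ X Y = 0

/-- The `(0,4)`-curvature `R(X,Y,Z,U) = g(∇_X∇_Y Z − ∇_Y∇_X Z − ∇_{[X,Y]}Z, U)`
of the multiply warped product. -/
def RmT (W : MW R VB V) (X Y Z U : VB × (∀ i, V i)) : R :=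
  W.gW (W.nablaT X (W.nablaT Y Z) - W.nablaT Y (W.nablaT X Z)
    - W.nablaT (W.bracketT X Y) Z) U

/-- The squared area `A²(X,Y) = g(X,X)g(Y,Y) − g(X,Y)²` of the parallelogram
generated by `X` and `Y`. -/
def A2 (W : MW R VB V) (X Y : VB × (∀ i, V i)) : R :=
  W.gW X X * W.gW Y Y - (W.gW X Y) ^ 2

end MW


namespace MW
variable {R : Type*} [CommRing R] {m : ℕ} {VB : Type*} {V : Fin m → Type*}
  [AddCommGroup VB] [Module R VB] [∀ i, AddCommGroup (V i)] [∀ i, Module R (V i)]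

lemma single_sum_aux (W : MW R VB V) (r : Fin m) (v : V r) (Y : ∀ i, V i) :
    ∑ i, (W.f i)^2 * (W.C i).g (Pi.single r v i) (Y i)
      = (W.f r)^2 * (W.C r).g v (Y r) := by
  classical
  rw [Finset.sum_eq_single_of_mem r (Finset.mem_univ r)]
  · rw [Pi.single_eq_same]
  · intro i _ hi
    rw [Pi.single_eq_of_ne hi, (W.C i).g_zerol', mul_zero]

lemma piV_sum_aux (W : MW R VB V) (r : Fin m) (P : V r) (z : ∀ i, V i) :
    ∑ i, W.piV r P z i = (W.f r)^2 * (W.C r).g (z r) P := by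
  classical
  rw [Finset.sum_eq_single_of_mem r (Finset.mem_univ r)]
  · rw [MW.piV, Pi.single_eq_same]
  · intro i _ hi
    rw [MW.piV, Pi.single_eq_of_ne (Ne.symm hi), (W.C r).g_zerol', mul_zero]

lemma gW_snablaF_aux (W : MW R VB V) (r : Fin m) (P : V r) (X Z Y : VB × (∀ i, V i)) :
    W.gW (W.snablaF r P X Z) Y =
      W.CB.g (W.CB.nabla X.1 Z.1) Y.1
      + (W.f r)^2 * (W.C r).g (Z.2 r) P * W.CB.g X.1 Y.1
      - ∑ i, W.f i * (W.C i).g (X.2 i) (Z.2 i) * W.CB.act Y.1 (W.f i)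
      + ∑ i, (W.f i)^2 * (W.C i).g ((W.C i).nabla (X.2 i) (Z.2 i)) (Y.2 i)
      + ∑ i, W.f i * W.CB.act X.1 (W.f i) * (W.C i).g (Z.2 i) (Y.2 i)
      + ∑ i, W.f i * W.CB.act Z.1 (W.f i) * (W.C i).g (X.2 i) (Y.2 i)
      + (W.f r)^2 * (W.C r).g (Z.2 r) P * ∑ i, (W.f i)^2 * (W.C i).g (X.2 i) (Y.2 i)
      - W.gW X Z * ((W.f r)^2 * (W.C r).g P (Y.2 r)) := by
  classical
  have hB : W.CB.g (W.CB.nabla X.1 Z.1 + ((W.f r)^2 * (W.C r).g (Z.2 r) P) • X.1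
      - ∑ i, (W.f i * (W.C i).g (X.2 i) (Z.2 i)) • W.gradf i) Y.1
      = W.CB.g (W.CB.nabla X.1 Z.1) Y.1
        + (W.f r)^2 * (W.C r).g (Z.2 r) P * W.CB.g X.1 Y.1
        - ∑ i, W.f i * (W.C i).g (X.2 i) (Z.2 i) * W.CB.act Y.1 (W.f i) := by
    rw [W.CB.g_subl', W.CB.g_addl, W.CB.g_smull, W.CB.g_suml']
    congr 1
    exact Finset.sum_congr rfl fun i _ => by rw [W.CB.g_smull, W.gradf_spec]
  have hF : ∑ i, (W.f i)^2 * (W.C i).g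
      ((W.C i).nabla (X.2 i) (Z.2 i)
        + (W.CB.act X.1 (W.f i) * W.finv i) • Z.2 i
        + (W.CB.act Z.1 (W.f i) * W.finv i) • X.2 i
        + ((W.f r)^2 * (W.C r).g (Z.2 r) P) • X.2 i
        + Pi.single r ((-(W.gW X Z)) • P) i) (Y.2 i)
      = ∑ i, ((W.f i)^2 * (W.C i).g ((W.C i).nabla (X.2 i) (Z.2 i)) (Y.2 i)
          + W.f i * W.CB.act X.1 (W.f i) * (W.C i).g (Z.2 i) (Y.2 i)
          + W.f i * W.CB.act Z.1 (W.f i) * (W.C i).g (X.2 i) (Y.2 i)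
          + (W.f r)^2 * (W.C r).g (Z.2 r) P * ((W.f i)^2 * (W.C i).g (X.2 i) (Y.2 i))
          + (W.f i)^2 * (W.C i).g (Pi.single r ((-(W.gW X Z)) • P) i) (Y.2 i)) := by
    refine Finset.sum_congr rfl fun i _ => ?_
    rw [(W.C i).g_addl, (W.C i).g_addl, (W.C i).g_addl, (W.C i).g_addl,
      (W.C i).g_smull, (W.C i).g_smull, (W.C i).g_smull]
    linear_combination (W.f i * W.CB.act X.1 (W.f i) * (W.C i).g (Z.2 i) (Y.2 i)
      + W.f i * W.CB.act Z.1 (W.f i) * (W.C i).g (X.2 i) (Y.2 i)) * W.f_inv i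
  have hsingle : ∑ i, (W.f i)^2 * (W.C i).g (Pi.single r ((-(W.gW X Z)) • P) i) (Y.2 i)
      = -(W.gW X Z * ((W.f r)^2 * (W.C r).g P (Y.2 r))) := by
    rw [W.single_sum_aux r _ Y.2, (W.C r).g_smull]
    ring
  show W.CB.g (W.snablaF r P X Z).1 Y.1
      + ∑ i, (W.f i)^2 * (W.C i).g ((W.snablaF r P X Z).2 i) (Y.2 i) = _
  simp only [MW.snablaF, Pi.add_apply]
  rw [hB, hF]
  simp only [Finset.sum_add_distrib]
  rw [← Finset.mul_sum, hsingle]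
  ring

end MW

/-- **Proposition 4.4.** For a multiply warped product `M = B ×_{f₁}M₁ × ⋯ ×_{f_m}M_m`
with semi-symmetric metric connection associated to `P ∈ Γ(TM_r)` and any `ζ, X, Y` on `M`:
`(L̄_ζ g)(X,Y) = (L^B_{ζ_B}g_B)(X_B,Y_B) + Σᵢ fᵢ²(Lⁱ_{ζᵢ}gᵢ)(Xᵢ,Yᵢ) + Σᵢ 2π(ζᵢ)g(X,Y)
 + Σᵢ 2fᵢζ_B(fᵢ)gᵢ(Xᵢ,Yᵢ) − Σᵢ π(Yᵢ)g(X,ζ) − Σᵢ π(Xᵢ)g(Y,ζ)`. -/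
theorem statement_9 {R : Type*} [CommRing R] {m : ℕ} {VB : Type*} {V : Fin m → Type*}
    [AddCommGroup VB] [Module R VB] [∀ i, AddCommGroup (V i)] [∀ i, Module R (V i)]
    (W : MW R VB V) (r : Fin m) (P : V r) (ζ X Y : VB × (∀ i, V i)) :
    W.sliegF r P ζ X Y =
      W.CB.lieg ζ.1 X.1 Y.1
        + ∑ i, (W.f i) ^ 2 * (W.C i).lieg (ζ.2 i) (X.2 i) (Y.2 i)
        + ∑ i, 2 * W.piV r P ζ.2 i * W.gW X Y
        + ∑ i, 2 * W.f i * W.CB.act ζ.1 (W.f i) * (W.C i).g (X.2 i) (Y.2 i)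
        - ∑ i, W.piV r P Y.2 i * W.gW X ζ
        - ∑ i, W.piV r P X.2 i * W.gW Y ζ := by
  classical
  have hlieg : ∑ i, (W.f i)^2 * (W.C i).lieg (ζ.2 i) (X.2 i) (Y.2 i)
      = (∑ i, (W.f i)^2 * (W.C i).g ((W.C i).nabla (X.2 i) (ζ.2 i)) (Y.2 i))
        + ∑ i, (W.f i)^2 * (W.C i).g ((W.C i).nabla (Y.2 i) (ζ.2 i)) (X.2 i) := by
    rw [← Finset.sum_add_distrib]
    exact Finset.sum_congr rfl fun i _ => by rw [PR.lieg]; ring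
  have hpi1 : ∑ i, 2 * W.piV r P ζ.2 i * W.gW X Y
      = 2 * ((W.f r)^2 * (W.C r).g (ζ.2 r) P) * W.gW X Y := by
    rw [← Finset.sum_mul, ← Finset.mul_sum, W.piV_sum_aux]
  have hpi2 : ∑ i, W.piV r P Y.2 i * W.gW X ζ
      = ((W.f r)^2 * (W.C r).g (Y.2 r) P) * W.gW X ζ := by
    rw [← Finset.sum_mul, W.piV_sum_aux]
  have hpi3 : ∑ i, W.piV r P X.2 i * W.gW Y ζ
      = ((W.f r)^2 * (W.C r).g (X.2 r) P) * W.gW Y ζ := by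
    rw [← Finset.sum_mul, W.piV_sum_aux]
  have h2f : ∑ i, 2 * W.f i * W.CB.act ζ.1 (W.f i) * (W.C i).g (X.2 i) (Y.2 i)
      = 2 * ∑ i, W.f i * W.CB.act ζ.1 (W.f i) * (W.C i).g (X.2 i) (Y.2 i) := by
    rw [Finset.mul_sum]
    exact Finset.sum_congr rfl fun i _ => by ring
  have hc1 : ∑ i, W.f i * W.CB.act X.1 (W.f i) * (W.C i).g (ζ.2 i) (Y.2 i)
      = ∑ i, W.f i * (W.C i).g (Y.2 i) (ζ.2 i) * W.CB.act X.1 (W.f i) :=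
    Finset.sum_congr rfl fun i _ => by rw [(W.C i).g_symm]; ring
  have hc2 : ∑ i, W.f i * W.CB.act Y.1 (W.f i) * (W.C i).g (ζ.2 i) (X.2 i)
      = ∑ i, W.f i * (W.C i).g (X.2 i) (ζ.2 i) * W.CB.act Y.1 (W.f i) :=
    Finset.sum_congr rfl fun i _ => by rw [(W.C i).g_symm]; ring
  have hc3 : ∑ i, W.f i * W.CB.act ζ.1 (W.f i) * (W.C i).g (Y.2 i) (X.2 i)
      = ∑ i, W.f i * W.CB.act ζ.1 (W.f i) * (W.C i).g (X.2 i) (Y.2 i) :=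
    Finset.sum_congr rfl fun i _ => by rw [(W.C i).g_symm]
  have hc4 : ∑ i, (W.f i)^2 * (W.C i).g (Y.2 i) (X.2 i)
      = ∑ i, (W.f i)^2 * (W.C i).g (X.2 i) (Y.2 i) :=
    Finset.sum_congr rfl fun i _ => by rw [(W.C i).g_symm]
  rw [MW.sliegF, W.gW_snablaF_aux r P X ζ Y, W.gW_snablaF_aux r P Y ζ X,
    hlieg, hpi1, hpi2, hpi3, h2f, hc1, hc2, hc3, hc4,
    W.CB.g_symm Y.1 X.1, (W.C r).g_symm P (Y.2 r), (W.C r).g_symm P (X.2 r),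
    PR.lieg]
  simp only [MW.gW]
  ring
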